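/- Let 𝒜 be an abelian category and V an object such that Ext^1(V, V^{(I)}) = 0 for all sets I for which the coproduct V^{(I)} exists in 𝒜. Then: (1) if 𝒜 is Hom-finite, V is Ext^1-universal if and only if V^{⊥1} is a cogenerating subcategory of 𝒜; (2) if 𝒜 is (Ab.3), then the conjunction (Ext^1(V,A) is a set for every object A, and ⨿^1_I V = 0 for every set I) holds if and only if V^{⊥1} is a cogenerating subcategory of 𝒜; and when these equivalent conditions hold, V is Ext^1-universal. -/

import Mathlib

/-!
Common definitions for formalizing results of "Tilting preenvelopes and cotilting
precovers in general Abelian categories" (Parra–Saorín–Virili).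

Conventions:
* Full subcategories of an abelian category `C` are encoded as `Set C`.
* "Sets" (index sets of families, coproducts, …) are encoded as types in the universe `v`
  of the morphisms of `C`.
* `Ext¹(X,Y) = 0` is encoded via the splitting of all short exact sequences
  `0 → Y → E → X → 0` (equivalently, the vanishing of the Yoneda Ext group).
* Relative (`…In B`) notions encode the corresponding notion computed inside the
  full (abelian exact) subcategory determined by `B : Set C`; the ambient case is
  `B = Set.univ`.
* Coproducts are not assumed to exist: a coproduct of a family existing in the
  (sub)category is encoded by a cocone with the universal property (`IsCoproductIn`).
-/

open CategoryTheory CategoryTheory.Limits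

universe w v u

attribute [local instance] CategoryTheory.Abelian.hasFiniteBiproducts

namespace Paper

variable {C : Type u} [Category.{v} C] [Abelian C]

/-- `(i, p)` is a short exact sequence `0 ⟶ A ⟶ E ⟶ B ⟶ 0` in `C`. -/
def IsShortExact {A E B : C} (i : A ⟶ E) (p : E ⟶ B) : Prop :=
  ∃ hw : i ≫ p = 0, (ShortComplex.mk i p hw).ShortExact

/-- `Q`, together with the injections `ι`, is the coproduct of the family `f`
inside the full subcategory determined by `B`. -/
structure IsCoproductIn (B : Set C) {I : Type v} (f : I → C) (Q : C)
    (ι : ∀ i, f i ⟶ Q) : Prop where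
  mem : ∀ i, f i ∈ B
  memQ : Q ∈ B
  desc : ∀ Z ∈ B, ∀ g : (∀ i, f i ⟶ Z), ∃! h : Q ⟶ Z, ∀ i, ι i ≫ h = g i

/-- `Ext¹(X, Y) = 0`, computed in the full subcategory determined by `B`:
every short exact sequence `0 → Y → E → X → 0` with `E ∈ B` splits. -/
def Ext1ZeroIn (B : Set C) (X Y : C) : Prop :=
  ∀ E ∈ B, ∀ (i : Y ⟶ E) (p : E ⟶ X), IsShortExact i p → ∃ r : E ⟶ Y, i ≫ r = 𝟙 Y

/-- `Ext¹(X, Y) = 0` in the ambient abelian category. -/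
def Ext1Zero (X Y : C) : Prop := Ext1ZeroIn Set.univ X Y

/-- `V^{⊥₁}`, computed in (the full subcategory determined by) `B`. -/
def rightPerp (B : Set C) (V : C) : Set C := {A ∈ B | Ext1ZeroIn B V A}

/-- `^{⊥₁}T`, computed in `B`. -/
def leftPerpSet (B T : Set C) : Set C := {A ∈ B | ∀ X ∈ T, Ext1ZeroIn B A X}

/-- `T^{⊥₁}`, computed in `B`. -/
def rightPerpSet (B T : Set C) : Set C := {A ∈ B | ∀ X ∈ T, Ext1ZeroIn B X A}

/-- `Sub(X)` relative to `B`: objects of `B` admitting a monomorphism into an object of `X`. -/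
def subIn (B X : Set C) : Set C := {A ∈ B | ∃ T ∈ X, ∃ f : A ⟶ T, Mono f}

/-- `Quot(X)` relative to `B`: objects of `B` which are epimorphic images of objects of `X`. -/
def quotIn (B X : Set C) : Set C := {A ∈ B | ∃ T ∈ X, ∃ f : T ⟶ A, Epi f}

/-- `(T, F)` is a torsion pair in (the full subcategory determined by) `B`. -/
structure IsTorsionPairIn (B T F : Set C) : Prop where
  eqF : F = {A ∈ B | ∀ X ∈ T, ∀ f : X ⟶ A, f = 0}
  eqT : T = {A ∈ B | ∀ Y ∈ F, ∀ f : A ⟶ Y, f = 0}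
  seq : ∀ A ∈ B, ∃ (X Y : C) (i : X ⟶ A) (p : A ⟶ Y), X ∈ T ∧ Y ∈ F ∧ IsShortExact i p

/-- `T` is a torsion class in `B`. -/
def IsTorsionClassIn (B T : Set C) : Prop := ∃ F, IsTorsionPairIn B T F

/-- `F` is a torsion-free class in `B`. -/
def IsTorsionFreeClassIn (B F : Set C) : Prop := ∃ T, IsTorsionPairIn B T F

/-- `φ : M ⟶ X` is a `T`-preenvelope. -/
structure IsPreenvelope (T : Set C) {M X : C} (φ : M ⟶ X) : Prop where
  mem : X ∈ T
  fac : ∀ T' ∈ T, ∀ g : M ⟶ T', ∃ h : X ⟶ T', φ ≫ h = g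

/-- `φ` is a semi-special `T`-preenvelope (relative to `B`):
a `T`-preenvelope whose cokernel lies in `^{⊥₁}T` (computed in `B`). -/
def IsSemiSpecialPreenvelopeIn (B T : Set C) {M X : C} (φ : M ⟶ X) : Prop :=
  IsPreenvelope T φ ∧ cokernel φ ∈ leftPerpSet B T

/-- `φ` is a special `T`-preenvelope (relative to `B`). -/
def IsSpecialPreenvelopeIn (B T : Set C) {M X : C} (φ : M ⟶ X) : Prop :=
  Mono φ ∧ IsSemiSpecialPreenvelopeIn B T φ

/-- `T` is preenveloping in `B`. -/
def PreenvelopingIn (B T : Set C) : Prop :=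
  ∀ M ∈ B, ∃ (X : C) (φ : M ⟶ X), IsPreenvelope T φ

/-- `T` is semi-special preenveloping in `B`. -/
def SemiSpecialPreenvelopingIn (B T : Set C) : Prop :=
  ∀ M ∈ B, ∃ (X : C) (φ : M ⟶ X), IsSemiSpecialPreenvelopeIn B T φ

/-- `T` is special preenveloping in `B`. -/
def SpecialPreenvelopingIn (B T : Set C) : Prop :=
  ∀ M ∈ B, ∃ (X : C) (φ : M ⟶ X), IsSpecialPreenvelopeIn B T φ

/-- `φ : X ⟶ M` is a `T`-precover. -/
structure IsPrecover (T : Set C) {X M : C} (φ : X ⟶ M) : Prop where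
  mem : X ∈ T
  fac : ∀ T' ∈ T, ∀ g : T' ⟶ M, ∃ h : T' ⟶ X, h ≫ φ = g

/-- `φ` is a semi-special `T`-precover (relative to `B`):
a `T`-precover whose kernel lies in `T^{⊥₁}` (computed in `B`). -/
def IsSemiSpecialPrecoverIn (B T : Set C) {X M : C} (φ : X ⟶ M) : Prop :=
  IsPrecover T φ ∧ kernel φ ∈ rightPerpSet B T

/-- `T` is precovering in `B`. -/
def PrecoveringIn (B T : Set C) : Prop :=
  ∀ M ∈ B, ∃ (X : C) (φ : X ⟶ M), IsPrecover T φ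

/-- `T` is semi-special precovering in `B`. -/
def SemiSpecialPrecoveringIn (B T : Set C) : Prop :=
  ∀ M ∈ B, ∃ (X : C) (φ : X ⟶ M), IsSemiSpecialPrecoverIn B T φ

/-- `Add(V)` relative to `B`: direct summands of coproducts (existing in `B`)
of copies of `V`. -/
def addIn (B : Set C) (V : C) : Set C :=
  {A ∈ B | ∃ (I : Type v) (Q : C) (ι : ∀ _ : I, V ⟶ Q),
     IsCoproductIn B (fun _ : I => V) Q ι ∧ ∃ (s : A ⟶ Q) (r : Q ⟶ A), s ≫ r = 𝟙 A}

/-- `Gen(V)` relative to `B`: quotients of objects of `Add(V)`. -/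
def genIn (B : Set C) (V : C) : Set C :=
  {A ∈ B | ∃ X ∈ addIn B V, ∃ p : X ⟶ A, Epi p}

/-- `Pres(V)` relative to `B`: cokernels of morphisms between objects of `Add(V)`. -/
def presIn (B : Set C) (V : C) : Set C :=
  {A ∈ B | ∃ X ∈ addIn B V, ∃ Y ∈ addIn B V,
     ∃ (f : X ⟶ Y) (c : Y ⟶ A) (hw : f ≫ c = 0), Epi c ∧ (ShortComplex.mk f c hw).Exact}

/-- `Ḡen(V) = Sub(Gen(V))` relative to `B`. -/
def barGenIn (B : Set C) (V : C) : Set C := subIn B (genIn B V)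

/-- The class `X` is cogenerating in `B`. -/
def CogeneratingIn (B X : Set C) : Prop := ∀ A ∈ B, ∃ T ∈ X, ∃ f : A ⟶ T, Mono f

/-- The class `X` is generating in `B`. -/
def GeneratingIn (B X : Set C) : Prop := ∀ A ∈ B, ∃ T ∈ X, ∃ f : T ⟶ A, Epi f

/-- `V` is a quasi-tilting object of (the full subcategory determined by) `B`:
`Gen(V)` is a torsion class and `Gen(V) = Pres(V) = Ḡen(V) ∩ V^{⊥₁}`. -/
def IsQuasiTiltingIn (B : Set C) (V : C) : Prop :=
  V ∈ B ∧ IsTorsionClassIn B (genIn B V) ∧ genIn B V = presIn B V ∧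
    genIn B V = barGenIn B V ∩ rightPerp B V

/-- `V` is a tilting object of `B`: quasi-tilting with `Gen(V)` cogenerating. -/
def IsTiltingIn (B : Set C) (V : C) : Prop :=
  IsQuasiTiltingIn B V ∧ CogeneratingIn B (genIn B V)

/-- `G` is an epi-generator of `B`: every object of `B` is an epimorphic image of a
coproduct (existing in `B`) of copies of `G`. -/
def IsEpiGeneratorIn (B : Set C) (G : C) : Prop :=
  G ∈ B ∧ ∀ A ∈ B, ∃ (I : Type v) (Q : C) (ι : ∀ _ : I, G ⟶ Q),
    IsCoproductIn B (fun _ : I => G) Q ι ∧ ∃ p : Q ⟶ A, Epi p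

/-- `0 → A —u→ X → V^{(J)} → 0` is a universal extension of `V` by `A` (relative to `B`):
the right end of the sequence is a nonempty coproduct of copies of `V` existing in `B`,
and the induced map `Ext¹(V,A) → Ext¹(V,X)` is zero (encoded: for every extension
`0 → A —i→ E → V → 0` with `E ∈ B`, its pushout along `u` splits, i.e. `u` extends
along `i`). -/
def IsUniversalExtensionIn (B : Set C) (V A X : C) (u : A ⟶ X) : Prop :=
  A ∈ B ∧ X ∈ B ∧
  (∃ (J : Type v) (_ : Nonempty J) (P : C) (κ : ∀ _ : J, V ⟶ P) (p : X ⟶ P),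
     IsCoproductIn B (fun _ : J => V) P κ ∧ IsShortExact u p) ∧
  (∀ E ∈ B, ∀ (i : A ⟶ E) (q : E ⟶ V), IsShortExact i q → ∃ ψ : E ⟶ X, i ≫ ψ = u)

/-- `V` is `Ext¹`-universal in `B`: universal extensions of `V` by every object exist. -/
def IsExt1UniversalIn (B : Set C) (V : C) : Prop :=
  ∀ A ∈ B, ∃ (X : C) (u : A ⟶ X), IsUniversalExtensionIn B V A X u

/-- `(X, Y)` is a cotorsion pair in (the full subcategory determined by) `B`. -/
def IsCotorsionPairIn (B X Y : Set C) : Prop :=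
  Y = {A ∈ B | ∀ Z ∈ X, Ext1ZeroIn B Z A} ∧
  X = {A ∈ B | ∀ Z ∈ Y, Ext1ZeroIn B A Z}

/-- The pair `(X, Y)` is right complete in `B`: every `A ∈ B` admits a short exact
sequence `0 → A → Y' → X' → 0` with `Y' ∈ Y`, `X' ∈ X`. -/
def RightCompleteIn (B X Y : Set C) : Prop :=
  ∀ A ∈ B, ∃ (Y' X' : C) (i : A ⟶ Y') (p : Y' ⟶ X'), Y' ∈ Y ∧ X' ∈ X ∧ IsShortExact i p

/-- The pair `(X, Y)` is left complete in `B`: every `A ∈ B` admits a short exact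
sequence `0 → Y' → X' → A → 0` with `Y' ∈ Y`, `X' ∈ X`. -/
def LeftCompleteIn (B X Y : Set C) : Prop :=
  ∀ A ∈ B, ∃ (Y' X' : C) (i : Y' ⟶ X') (p : X' ⟶ A), Y' ∈ Y ∧ X' ∈ X ∧ IsShortExact i p

/-- The full subcategory determined by `B` is reflective in `C`:
the (fully faithful) inclusion functor has a left adjoint. -/
def IsReflectiveSub (B : Set C) : Prop :=
  (ObjectProperty.ι (· ∈ B : ObjectProperty C)).IsRightAdjoint

/-- The full subcategory determined by `B` is coreflective in `C`:
the inclusion functor has a right adjoint. -/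
def IsCoreflectiveSub (B : Set C) : Prop :=
  (ObjectProperty.ι (· ∈ B : ObjectProperty C)).IsLeftAdjoint

/-- `Ext²(V, A) = 0` (Yoneda `Ext²`): every `2`-fold extension
`0 → A —g→ X₁ —f→ X₀ —p→ V → 0` represents the trivial class, i.e. (by the standard
long-exact-sequence criterion) the extension `0 → A → X₁ → im f → 0` extends to an
extension of `X₀` by `A`. -/
def Ext2Zero (V A : C) : Prop :=
  ∀ (X1 X0 : C) (g : A ⟶ X1) (f : X1 ⟶ X0) (p : X0 ⟶ V)
    (w1 : g ≫ f = 0) (w2 : f ≫ p = 0),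
    Mono g → Epi p → (ShortComplex.mk g f w1).Exact → (ShortComplex.mk f p w2).Exact →
    ∃ (Y : C) (a : A ⟶ Y) (b : Y ⟶ X0), IsShortExact a b ∧
      ∃ φ : X1 ⟶ Y, g ≫ φ = a ∧ φ ≫ b = f

/-- `V` has projective dimension at most `1`: `Ext²(V, A) = 0` for every `A`. -/
def ProjDimLE1 (V : C) : Prop := ∀ A : C, Ext2Zero V A

/-- The "elements" of the (possibly large) Yoneda `Ext¹(X, Y)`: short exact sequences
`0 → Y → E → X → 0`. -/
def ExtElem (X Y : C) : Type (max u v) :=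
  Σ' (E : C) (i : Y ⟶ E) (p : E ⟶ X), IsShortExact i p

/-- Yoneda equivalence of extensions. -/
def extRel (X Y : C) : ExtElem X Y → ExtElem X Y → Prop :=
  fun e₁ e₂ => ∃ φ : e₁.1 ⟶ e₂.1, e₁.2.1 ≫ φ = e₂.2.1 ∧ φ ≫ e₂.2.2.1 = e₁.2.2.1

/-- The (possibly large) Yoneda `Ext¹(X, Y)`, as the quotient of the collection
of extensions by Yoneda equivalence. -/
def ExtClass (X Y : C) : Type (max u v) := Quot (extRel X Y)

/-- `Ext¹(A, B)` is a finitely generated (right) `End(A)`-module: there are `n : ℕ` and a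
short exact sequence `0 → B → X → A^n → 0` whose connecting map
`Hom(A, A^n) → Ext¹(A, B)` is surjective, i.e. every extension of `A` by `B` is a pullback
of the fixed one along some `h : A ⟶ A^n`. -/
def Ext1FGEnd (A B : C) : Prop :=
  ∃ (n : ℕ) (X : C) (u : B ⟶ X) (p : X ⟶ ⨁ (fun _ : Fin n => A)),
    IsShortExact u p ∧
    ∀ (E : C) (i : B ⟶ E) (q : E ⟶ A), IsShortExact i q →
      ∃ (h : A ⟶ ⨁ (fun _ : Fin n => A)) (φ : E ⟶ X), i ≫ φ = u ∧ φ ≫ p = q ≫ h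

/-- `∐¹_I f = 0`: for every `I`-indexed family of short exact sequences
`0 → Xᵢ → Yᵢ → fᵢ → 0`, the induced morphism `∐ Xᵢ → ∐ Yᵢ` between (existing)
coproducts is a monomorphism. -/
def CoprodDerivedZeroFam {I : Type v} (f : I → C) : Prop :=
  ∀ (X Y : I → C) (u : ∀ i, X i ⟶ Y i) (p : ∀ i, Y i ⟶ f i),
    (∀ i, IsShortExact (u i) (p i)) →
    ∀ (QX QY : C) (ιX : ∀ i, X i ⟶ QX) (ιY : ∀ i, Y i ⟶ QY) (uu : QX ⟶ QY),
      IsCoproductIn Set.univ X QX ιX → IsCoproductIn Set.univ Y QY ιY →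
      (∀ i, ιX i ≫ uu = u i ≫ ιY i) → Mono uu

/-- `∐¹_I V = 0` for the constant family at `V`. -/
def CoprodDerivedZero (I : Type v) (V : C) : Prop :=
  CoprodDerivedZeroFam (fun _ : I => V)

/-- Witness that the category `D` is `Hom`-finite: a commutative ring `R` together with an
`R`-linear structure on `D` for which all `Hom`-modules are finitely generated. -/
structure HomFiniteStruct (D : Type u) [Category.{v} D] [Preadditive D] :
    Type (max u (v + 1)) where
  R : Type v
  [commRing : CommRing R]
  [linear : CategoryTheory.Linear R D]
  homFinite : ∀ A B : D, Module.Finite R (A ⟶ B)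

/-- The category `D` is `Hom`-finite. -/
def HomFinite (D : Type u) [Category.{v} D] [Preadditive D] : Prop :=
  Nonempty (HomFiniteStruct D)

/-- `Q`, with injections `ι`, is a coproduct of the family `f` in an arbitrary category. -/
def IsCoproductCocone {D : Type u} [Category.{v} D] {I : Type w} (f : I → D) (Q : D)
    (ι : ∀ i, f i ⟶ Q) : Prop :=
  ∀ (Z : D) (g : ∀ i, f i ⟶ Z), ∃! h : Q ⟶ Z, ∀ i, ι i ≫ h = g i

/-- The category `D` satisfies (Ab.4): it has all (small) coproducts, and coproducts
of monomorphisms are monomorphisms (for abelian categories, the latter is equivalent to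
the exactness of coproducts). -/
def Ab4Type (D : Type u) [Category.{v} D] : Prop :=
  HasCoproducts.{v} D ∧
  ∀ (I : Type v) (X Y : I → D) (u : ∀ i, X i ⟶ Y i), (∀ i, Mono (u i)) →
    ∀ (QX QY : D) (ιX : ∀ i, X i ⟶ QX) (ιY : ∀ i, Y i ⟶ QY) (uu : QX ⟶ QY),
      IsCoproductCocone X QX ιX → IsCoproductCocone Y QY ιY →
      (∀ i, ιX i ≫ uu = u i ≫ ιY i) → Mono uu

/-- The category `D` satisfies (Ab.5): it has all (small) coproducts and directed
(filtered) colimits of monomorphisms are monomorphisms (for abelian categories the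
latter is equivalent to the exactness of directed colimits). -/
def Ab5Type (D : Type u) [Category.{v} D] : Prop :=
  HasCoproducts.{v} D ∧
  ∀ (J : Type v) [SmallCategory J] [IsFiltered J] (F G : J ⥤ D) (α : F ⟶ G),
    (∀ j, Mono (α.app j)) →
    ∀ (cF : Cocone F) (cG : Cocone G), IsColimit cF → IsColimit cG →
      ∀ m : cF.pt ⟶ cG.pt, (∀ j, cF.ι.app j ≫ m = α.app j ≫ cG.ι.app j) → Mono m

/-- A ring `S` is left coherent: every finitely generated left ideal is finitely
presented as a left `S`-module. -/
def LeftCoherentRing (S : Type u) [Ring S] : Prop :=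
  ∀ J : Submodule S S, J.FG → Module.FinitePresentation S J

/-- A ring `S` is right coherent: every finitely generated right ideal (i.e. finitely
generated left ideal of `Sᵐᵒᵖ`) is finitely presented as a right `S`-module. -/
def RightCoherentRing (S : Type u) [Ring S] : Prop :=
  ∀ J : Submodule Sᵐᵒᵖ Sᵐᵒᵖ, J.FG → Module.FinitePresentation Sᵐᵒᵖ J

end Paper

/-!
A universal extension `0 → A → X → V^{(J)} → 0` has `Ext¹(V, X) = 0`: in
`Ext¹(V, A) → Ext¹(V, X) → Ext¹(V, V^{(J)})` the first map is zero by universality and the last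
group vanishes by hypothesis. So universal extensions embed every object into `V^{⊥₁}`.

Conversely, given `A ↪ T` with `T ∈ V^{⊥₁}`, every extension of `V` by `A` is the pullback of
`0 → A → T → T/A → 0` along some `γ : V → T/A`. This bounds `Ext¹(V, A)` by a set, and pulling
back along a map `V^{(J)} → T/A` through which every `γ` factors gives a universal extension:
`J` is finite when `Hom(V, T/A)` is a finitely generated module, and `J = Hom(V, T/A)` under
(Ab.3). Extending maps into `V^{⊥₁}` along the given sequences shows `∐¹ V = 0`.

Under (Ab.3), if `Ext¹(V, A)` is a set and `∐¹ V = 0`, the coproduct of one representative of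
each class is a short exact sequence `0 → A^{(S)} → ∐ Eₛ → V^{(S)} → 0`, and its pushout along
the codiagonal `A^{(S)} → A` is a universal extension.
-/

namespace Paper

lemma isCoproductIn_sigma {C : Type u} [Category.{v} C] {I : Type v} (f : I → C)
    [HasCoproduct f] : IsCoproductIn Set.univ f (∐ f) (Sigma.ι f) :=
  ⟨fun _ => trivial, trivial, fun _ _ g =>
    ⟨Sigma.desc g, Sigma.ι_desc g, fun _ hh => Sigma.hom_ext _ _ fun i => by simp [hh]⟩⟩

variable {C : Type u} [Category.{v} C] [Abelian C]

namespace IsShortExact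

variable {A E B : C} {i : A ⟶ E} {p : E ⟶ B}

lemma w (h : IsShortExact i p) : i ≫ p = 0 := h.choose

lemma shortExact (h : IsShortExact i p) : (ShortComplex.mk i p h.w).ShortExact :=
  h.choose_spec

lemma mono (h : IsShortExact i p) : Mono i := h.shortExact.mono_f

lemma epi (h : IsShortExact i p) : Epi p := h.shortExact.epi_g

lemma exists_lift (h : IsShortExact i p) {T : C} (g : T ⟶ E) (hg : g ≫ p = 0) :
    ∃ l : T ⟶ A, l ≫ i = g :=
  ⟨_, (KernelFork.IsLimit.lift' h.shortExact.fIsKernel g hg).2⟩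

lemma exists_desc (h : IsShortExact i p) {T : C} (g : E ⟶ T) (hg : i ≫ g = 0) :
    ∃ d : B ⟶ T, p ≫ d = g :=
  ⟨_, (CokernelCofork.IsColimit.desc' h.shortExact.gIsCokernel g hg).2⟩

lemma of_lift (w : i ≫ p = 0) [Mono i] [Epi p]
    (hk : ∀ {T : C} (g : T ⟶ E), g ≫ p = 0 → ∃ l : T ⟶ A, l ≫ i = g) :
    IsShortExact i p :=
  ⟨w, .mk' (ShortComplex.exact_of_f_is_kernel _ (KernelFork.IsLimit.ofι' i w
    fun g hg => ⟨(hk g hg).choose, (hk g hg).choose_spec⟩)) inferInstance inferInstance⟩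

lemma of_desc (w : i ≫ p = 0) [Mono i] [Epi p]
    (hc : ∀ {T : C} (g : E ⟶ T), i ≫ g = 0 → ∃ d : B ⟶ T, p ≫ d = g) :
    IsShortExact i p :=
  ⟨w, .mk' (ShortComplex.exact_of_g_is_cokernel _ (CokernelCofork.IsColimit.ofπ' p w
    fun g hg => ⟨(hc g hg).choose, (hc g hg).choose_spec⟩)) inferInstance inferInstance⟩

lemma pushout_inr (h : IsShortExact i p) {B' : C} (f : A ⟶ B') :
    IsShortExact (pushout.inr i f) (pushout.desc p 0 (by rw [h.w, comp_zero])) := by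
  have := h.mono
  have := h.epi
  have : Epi (pushout.desc p 0 _ : pushout i f ⟶ B) :=
    epi_of_epi_fac (pushout.inl_desc (f := i) (g := f) _ _ (by rw [h.w, comp_zero]))
  refine of_desc (pushout.inr_desc _ _ _) fun g hg => ?_
  obtain ⟨d, hd⟩ := h.exists_desc (pushout.inl i f ≫ g)
    (by rw [pushout.condition_assoc, hg, comp_zero])
  exact ⟨d, pushout.hom_ext (by rw [pushout.inl_desc_assoc, hd])
    (by rw [pushout.inr_desc_assoc, zero_comp, hg])⟩

lemma pullback_snd (h : IsShortExact i p) {Y : C} (g : Y ⟶ B) :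
    IsShortExact (pullback.lift i 0 (by rw [h.w, zero_comp])) (pullback.snd p g) := by
  have := h.mono
  have := h.epi
  have : Mono (pullback.lift i 0 _ : A ⟶ pullback p g) :=
    mono_of_mono_fac (pullback.lift_fst (f := p) (g := g) _ _ (by rw [h.w, zero_comp]))
  refine of_lift (pullback.lift_snd _ _ _) fun t ht => ?_
  obtain ⟨l, hl⟩ := h.exists_lift (t ≫ pullback.fst p g)
    (by rw [Category.assoc, pullback.condition, reassoc_of% ht, zero_comp])
  exact ⟨l, pullback.hom_ext (by rw [Category.assoc, pullback.lift_fst, hl])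
    (by rw [Category.assoc, pullback.lift_snd, comp_zero, ht])⟩

lemma isPushout_of_comm {K X V : C} {a : A ⟶ K} {b : K ⟶ V} {j : X ⟶ E} {q : E ⟶ V}
    (hab : IsShortExact a b) (hjq : IsShortExact j q) {u : A ⟶ X} {κ : K ⟶ E}
    (h₁ : a ≫ κ = u ≫ j) (h₂ : κ ≫ q = b) : IsPushout a u κ j := by
  let φ : ShortComplex.mk _ _ (hab.pushout_inr u).w ⟶ ShortComplex.mk j q hjq.w :=
    { τ₁ := 𝟙 X
      τ₂ := pushout.desc κ j h₁
      τ₃ := 𝟙 V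
      comm₁₂ := by simp [pushout.inr_desc]
      comm₂₃ := pushout.hom_ext (by simp [pushout.inl_desc_assoc, pushout.inl_desc, h₂])
        (by simp [pushout.inr_desc_assoc, pushout.inr_desc, hjq.w]) }
  have := ShortComplex.isIso₂_of_shortExact_of_isIso₁₃ φ (hab.pushout_inr u).shortExact
    hjq.shortExact
  exact .of_iso_pushout ⟨h₁⟩ (asIso φ.τ₂).symm (by simp [φ, pushout.inl_desc])
    (by simp [φ, pushout.inr_desc])

end IsShortExact

lemma isShortExact_cokernel_π {A T : C} (m : A ⟶ T) [Mono m] :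
    IsShortExact m (cokernel.π m) :=
  ⟨_, .mk' (ShortComplex.cokernelSequence_exact m) inferInstance inferInstance⟩

lemma isShortExact_biprod (A V : C) : IsShortExact (biprod.inl : A ⟶ A ⊞ V) biprod.snd :=
  ⟨_, (ShortComplex.Splitting.ofHasBinaryBiproduct A V).shortExact⟩

lemma Ext1Zero.exists_extension {V T X Y : C} (hT : Ext1Zero V T) {u : X ⟶ Y} {p : Y ⟶ V}
    (h : IsShortExact u p) (t : X ⟶ T) : ∃ s : Y ⟶ T, u ≫ s = t := by
  obtain ⟨r, hr⟩ := hT _ trivial _ _ (h.pushout_inr t)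
  exact ⟨pushout.inl u t ≫ r, by rw [pushout.condition_assoc, hr, Category.comp_id]⟩

lemma Ext1Zero.exists_hom_cokernelSequence {V A T E : C} (hT : Ext1Zero V T) (m : A ⟶ T)
    [Mono m] {i : A ⟶ E} {q : E ⟶ V} (h : IsShortExact i q) :
    ∃ (s : E ⟶ T) (γ : V ⟶ cokernel m), i ≫ s = m ∧ s ≫ cokernel.π m = q ≫ γ := by
  obtain ⟨s, hs⟩ := hT.exists_extension h m
  obtain ⟨γ, hγ⟩ := h.exists_desc (s ≫ cokernel.π m)
    (by rw [reassoc_of% hs, cokernel.condition])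
  exact ⟨s, γ, hs, hγ.symm⟩

lemma isShortExact_kernelLift_of_comp_eq {A X P E V : C} {u : A ⟶ X} {π : X ⟶ P}
    {j : X ⟶ E} {q : E ⟶ V} (huπ : IsShortExact u π) (hjq : IsShortExact j q) {ρ : E ⟶ P}
    (hρ : j ≫ ρ = π) :
    IsShortExact (kernel.lift ρ (u ≫ j) (by rw [Category.assoc, hρ, huπ.w]))
      (kernel.ι ρ ≫ q) := by
  have := huπ.mono
  have := huπ.epi
  have := hjq.mono
  have := hjq.epi
  have : Epi ρ := epi_of_epi_fac hρ
  have : Mono (kernel.lift ρ (u ≫ j) _) :=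
    mono_of_mono_fac (kernel.lift_ι ρ (u ≫ j) (by rw [Category.assoc, hρ, huπ.w]))
  have : Epi (kernel.ι ρ ≫ q) := by
    refine (Preadditive.epi_iff_cancel_zero _).2 fun T t ht => ?_
    obtain ⟨s, hs⟩ : ∃ s, ρ ≫ s = q ≫ t :=
      ⟨_, Abelian.comp_epiDesc ρ (q ≫ t) (by rwa [← Category.assoc])⟩
    have hs0 : s = 0 :=
      zero_of_epi_comp π (by rw [← hρ, Category.assoc, hs, reassoc_of% hjq.w, zero_comp])
    exact zero_of_epi_comp q (by rw [← hs, hs0, comp_zero])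
  refine .of_lift (by simp [hjq.w]) fun g hg => ?_
  obtain ⟨l, hl⟩ := hjq.exists_lift (g ≫ kernel.ι ρ) (by rwa [Category.assoc])
  obtain ⟨w, hw⟩ := huπ.exists_lift l (by rw [← hρ, reassoc_of% hl, kernel.condition, comp_zero])
  exact ⟨w, by rw [← cancel_mono (kernel.ι ρ)]; simp [reassoc_of% hw, hl]⟩

lemma ext1Zero_of_universal {V A X P : C} {u : A ⟶ X} {π : X ⟶ P}
    (huπ : IsShortExact u π) (hP : Ext1Zero V P)
    (hU : ∀ E ∈ (Set.univ : Set C), ∀ (i : A ⟶ E) (q : E ⟶ V), IsShortExact i q →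
      ∃ ψ : E ⟶ X, i ≫ ψ = u) :
    Ext1Zero V X := by
  intro E _ j q hjq
  obtain ⟨ρ, hρ⟩ := hP.exists_extension hjq π
  -- `K = ker ρ` is an extension of `V` by `A` whose pushout along `u` is `E`, so `𝟙 X` and the
  -- map `K ⟶ X` given by universality glue to a retraction of `j`.
  have hK := isShortExact_kernelLift_of_comp_eq huπ hjq hρ
  obtain ⟨ψ, hψ⟩ := hU _ trivial _ _ hK
  have sq := hK.isPushout_of_comm hjq (kernel.lift_ι _ _ _) rfl
  exact ⟨sq.desc ψ (𝟙 X) (by rw [hψ, Category.comp_id]), sq.inr_desc _ _ _⟩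

lemma cogeneratingIn_rightPerp_of_isExt1UniversalIn {V : C}
    (hV : ∀ (I : Type v) (Q : C) (ι : ∀ _ : I, V ⟶ Q),
      IsCoproductIn Set.univ (fun _ : I => V) Q ι → Ext1Zero V Q)
    (h : IsExt1UniversalIn Set.univ V) : CogeneratingIn Set.univ (rightPerp Set.univ V) := by
  intro A _
  obtain ⟨X, u, -, -, ⟨J, -, P, κ, π, hP, huπ⟩, hU⟩ := h A trivial
  exact ⟨X, ⟨trivial, ext1Zero_of_universal huπ (hV J P κ hP) hU⟩, u,
    huπ.mono⟩

lemma exists_isUniversalExtensionIn_of_forall_factors {V A T : C} (hT : Ext1Zero V T)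
    (m : A ⟶ T) [Mono m] {J : Type v} [Nonempty J] [HasCoproduct fun _ : J => V]
    (g : J → (V ⟶ cokernel m))
    (hg : ∀ γ : V ⟶ cokernel m, ∃ w : V ⟶ ∐ fun _ : J => V, w ≫ Sigma.desc g = γ) :
    ∃ (X : C) (u : A ⟶ X), IsUniversalExtensionIn Set.univ V A X u := by
  refine ⟨_, _, trivial, trivial, ⟨J, inferInstance, _, Sigma.ι _, _, isCoproductIn_sigma _,
    (isShortExact_cokernel_π m).pullback_snd (Sigma.desc g)⟩, fun E _ i q h => ?_⟩
  obtain ⟨s, γ, hs, hγ⟩ := hT.exists_hom_cokernelSequence m h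
  obtain ⟨w, rfl⟩ := hg γ
  exact ⟨pullback.lift s (q ≫ w) (by rw [hγ, Category.assoc]),
    pullback.hom_ext (by simp [pullback.lift_fst, hs])
      (by simp [pullback.lift_snd, reassoc_of% h.w])⟩

lemma exists_finite_sigmaDesc_factors {R : Type v} [CommRing R] [Linear R C] (V P : C)
    [Module.Finite R (V ⟶ P)] :
    ∃ (J : Type v) (_ : Finite J) (_ : Nonempty J) (g : J → (V ⟶ P)),
      ∀ γ : V ⟶ P, ∃ w : V ⟶ ∐ fun _ : J => V, w ≫ Sigma.desc g = γ := by
  obtain ⟨S, hS⟩ := Module.Finite.fg_top (R := R) (M := V ⟶ P)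
  -- the extra index `none` keeps `J` nonempty, as universal extensions require
  let g : Option S → (V ⟶ P) := fun o => o.elim 0 Subtype.val
  refine ⟨Option S, inferInstance, inferInstance, g, fun γ => ?_⟩
  have hγ : γ ∈ Submodule.span R (Set.range g) :=
    Submodule.span_mono (fun x hx => ⟨some ⟨x, hx⟩, rfl⟩ : (S : Set (V ⟶ P)) ⊆ Set.range g)
      (hS ▸ Submodule.mem_top)
  obtain ⟨c, hc⟩ := (Submodule.mem_span_range_iff_exists_fun R).mp hγ
  exact ⟨∑ j, c j • Sigma.ι (fun _ => V) j,
    by simpa [Preadditive.sum_comp, Linear.smul_comp] using hc⟩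

lemma isExt1UniversalIn_of_homFinite (hfin : HomFinite C) {V : C}
    (hcog : CogeneratingIn Set.univ (rightPerp Set.univ V)) : IsExt1UniversalIn Set.univ V := by
  obtain ⟨hR⟩ := hfin
  let := hR.commRing
  let := hR.linear
  intro A _
  obtain ⟨T, ⟨-, hT⟩, m, hm⟩ := hcog A trivial
  have := hR.homFinite V (cokernel m)
  obtain ⟨J, _, _, g, hg⟩ := exists_finite_sigmaDesc_factors (R := hR.R) V (cokernel m)
  exact exists_isUniversalExtensionIn_of_forall_factors hT m g hg

lemma isExt1UniversalIn_of_hasCoproducts [HasCoproducts.{v} C] {V : C}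
    (hcog : CogeneratingIn Set.univ (rightPerp Set.univ V)) : IsExt1UniversalIn Set.univ V := by
  intro A _
  obtain ⟨T, ⟨-, hT⟩, m, hm⟩ := hcog A trivial
  exact exists_isUniversalExtensionIn_of_forall_factors hT m (J := V ⟶ cokernel m) id
    fun γ => ⟨Sigma.ι (fun _ => V) γ, by simp⟩

lemma small_extClass_of_mono {V A T : C} (hT : Ext1Zero V T) (m : A ⟶ T) [Mono m] :
    Small.{v} (ExtClass V A) := by
  refine small_of_surjective (f := fun γ : V ⟶ cokernel m =>
    Quot.mk _ ⟨_, _, _, (isShortExact_cokernel_π m).pullback_snd γ⟩) ?_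
  rintro ⟨E, i, q, h⟩
  obtain ⟨s, γ, hs, hγ⟩ := hT.exists_hom_cokernelSequence m h
  refine ⟨γ, (Quot.sound ⟨pullback.lift s q hγ, pullback.hom_ext ?_ ?_,
    pullback.lift_snd _ _ _⟩).symm⟩
  · simp [pullback.lift_fst, hs]
  · simp [pullback.lift_snd, h.w]

lemma coprodDerivedZero_of_cogeneratingIn {V : C}
    (hcog : CogeneratingIn Set.univ (rightPerp Set.univ V)) (I : Type v) :
    CoprodDerivedZero I V := by
  intro X Y u p hup QX QY ιX ιY uu hQX hQY hcomm
  obtain ⟨T, ⟨-, hT : Ext1Zero V T⟩, m, hm⟩ := hcog QX trivial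
  choose s hs using fun i => hT.exists_extension (hup i) (ιX i ≫ m)
  obtain ⟨t, ht, -⟩ := hQY.desc T trivial s
  obtain ⟨t', -, huniq⟩ := hQX.desc T trivial fun i => ιX i ≫ m
  have : uu ≫ t = m :=
    (huniq _ fun i => by rw [reassoc_of% hcomm i, ht, hs]).trans (huniq m fun _ => rfl).symm
  exact mono_of_mono_fac this

lemma extRel_equivalence (X Y : C) : Equivalence (extRel X Y) where
  refl _ := ⟨𝟙 _, Category.comp_id _, Category.id_comp _⟩
  symm := by
    rintro ⟨E₁, i₁, p₁, h₁⟩ ⟨E₂, i₂, p₂, h₂⟩ ⟨φ, hi, hp⟩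
    let Φ : ShortComplex.mk i₁ p₁ h₁.w ⟶ ShortComplex.mk i₂ p₂ h₂.w :=
      { τ₁ := 𝟙 Y, τ₂ := φ, τ₃ := 𝟙 X
        comm₁₂ := by simpa using hi.symm
        comm₂₃ := by simpa using hp }
    have : IsIso φ := ShortComplex.isIso₂_of_shortExact_of_isIso₁₃ Φ h₁.shortExact h₂.shortExact
    exact ⟨inv φ, (IsIso.comp_inv_eq φ).2 hi.symm, (IsIso.inv_comp_eq φ).2 hp.symm⟩
  trans := fun ⟨φ, hi, hp⟩ ⟨φ', hi', hp'⟩ =>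
    ⟨φ ≫ φ', by rw [reassoc_of% hi, hi'], by rw [Category.assoc, hp', hp]⟩

lemma isShortExact_sigmaMap {J : Type v} {X Y Z : J → C} [HasCoproduct X] [HasCoproduct Y]
    [HasCoproduct Z] {f : ∀ j, X j ⟶ Y j} {g : ∀ j, Y j ⟶ Z j}
    (h : ∀ j, IsShortExact (f j) (g j)) [Mono (Limits.Sigma.map f)] :
    IsShortExact (Limits.Sigma.map f) (Limits.Sigma.map g) := by
  have := fun j => (h j).epi
  refine .of_desc (Sigma.hom_ext _ _ fun j => by simp [reassoc_of% (h j).w]) fun t ht => ?_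
  choose d hd using fun j =>
    (h j).exists_desc (Sigma.ι Y j ≫ t) (by simpa using Sigma.ι X j ≫= ht)
  exact ⟨Sigma.desc d, Sigma.hom_ext _ _ fun j => by simp [hd]⟩

lemma exists_isUniversalExtensionIn_of_small [HasCoproducts.{v} C] {V A : C}
    [Small.{v} (ExtClass V A)] (hV : CoprodDerivedZero (Shrink.{v} (ExtClass V A)) V) :
    ∃ (X : C) (u : A ⟶ X), IsUniversalExtensionIn Set.univ V A X u := by
  let S := Shrink.{v} (ExtClass V A)
  choose E i q h hrep using fun s : S => show ∃ (E : C) (i : A ⟶ E) (q : E ⟶ V)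
      (h : IsShortExact i q), (Quot.mk _ ⟨E, i, q, h⟩ : ExtClass V A) = (equivShrink _).symm s
    from let ⟨⟨E, i, q, h⟩, hx⟩ := Quot.exists_rep ((equivShrink (ExtClass V A)).symm s)
      ⟨E, i, q, h, hx⟩
  have hS : Nonempty S := ⟨equivShrink _ (Quot.mk _ ⟨_, _, _, isShortExact_biprod A V⟩)⟩
  have : Mono (Limits.Sigma.map i) :=
    hV _ _ _ _ h _ _ _ _ _ (isCoproductIn_sigma _) (isCoproductIn_sigma _) (Sigma.ι_map i)
  have hsum := (isShortExact_sigmaMap h).pushout_inr (Sigma.desc fun _ => 𝟙 A)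
  refine ⟨_, _, trivial, trivial, ⟨S, hS, _, Sigma.ι _, _, isCoproductIn_sigma _, hsum⟩,
    fun E₀ _ i₀ q₀ h₀ => ?_⟩
  let s₀ : S := equivShrink _ (Quot.mk _ ⟨E₀, i₀, q₀, h₀⟩)
  obtain ⟨φ, hφ, -⟩ : extRel V A ⟨E₀, i₀, q₀, h₀⟩ ⟨E s₀, i s₀, q s₀, h s₀⟩ :=
    (extRel_equivalence V A).eqvGen_iff.mp <| Quot.eqvGen_exact <|
      ((hrep s₀).trans ((equivShrink (ExtClass V A)).symm_apply_apply _)).symm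
  refine ⟨φ ≫ Sigma.ι E s₀ ≫ pushout.inl _ _, ?_⟩
  dsimp only at hφ
  rw [reassoc_of% hφ, ← Sigma.ι_map_assoc, pushout.condition, Sigma.ι_desc_assoc,
    Category.id_comp]

end Paper

namespace Stmt14

open Paper CategoryTheory CategoryTheory.Limits

variable {C : Type u} [Category.{v} C] [Abelian C]

theorem statement14 (V : C)
    -- `Ext¹(V, V^{(I)}) = 0` for all sets `I` for which the coproduct exists:
    (hV : ∀ (I : Type v) (Q : C) (ι : ∀ _ : I, V ⟶ Q),
      IsCoproductIn Set.univ (fun _ : I => V) Q ι → Ext1Zero V Q) :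
    -- (1) if `𝒜` is `Hom`-finite:
    (HomFinite C →
      (IsExt1UniversalIn Set.univ V ↔
        CogeneratingIn Set.univ (rightPerp Set.univ V))) ∧
    -- (2) if `𝒜` is (Ab.3):
    (HasCoproducts.{v} C →
      ((((∀ A : C, Small.{v} (ExtClass V A)) ∧ (∀ I : Type v, CoprodDerivedZero I V)) ↔
          CogeneratingIn Set.univ (rightPerp Set.univ V)) ∧
       (CogeneratingIn Set.univ (rightPerp Set.univ V) →
          IsExt1UniversalIn Set.univ V))) := by
  have cogenerating_of_universal := cogeneratingIn_rightPerp_of_isExt1UniversalIn hV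
  refine ⟨fun hfin => ⟨cogenerating_of_universal, isExt1UniversalIn_of_homFinite hfin⟩,
    fun _ => ⟨⟨?_, ?_⟩, isExt1UniversalIn_of_hasCoproducts⟩⟩
  · rintro ⟨hsmall, hcd⟩
    exact cogenerating_of_universal fun A _ => exists_isUniversalExtensionIn_of_small (hcd _)
  · intro hcog
    refine ⟨fun A => ?_, coprodDerivedZero_of_cogeneratingIn hcog⟩
    obtain ⟨T, ⟨-, hT⟩, m, hm⟩ := hcog A trivial
    exact small_extClass_of_mono hT m

end Stmt14
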